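/- arXiv:2008.13075 — 6 statements merged into one kernel-verified Lean document; each statement's English description precedes it below -/
import Mathlib

section
/- If {v0, v1, v2} is an obtuse superbase in ℝ² (v0 = -v1-v2, all pairwise inner products nonpositive) ordered so that ‖v1‖ ≤ ‖v2‖ ≤ ‖v0‖, then {v1, v2} is a Minkowski-reduced basis, i.e., 2|v1·v2| ≤ ‖v1‖². -/
open RealInnerProductSpace

theorem norm_le_norm_add_iff_neg_two_mul_inner_le {E : Type*} [NormedAddCommGroup E]
    [InnerProductSpace ℝ E] (u v : E) :
    ‖v‖ ≤ ‖u + v‖ ↔ -(2 * ⟪u, v⟫) ≤ ‖u‖ ^ 2 := by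
  rw [← sq_le_sq₀ (norm_nonneg v) (norm_nonneg (u + v)), norm_add_sq_real]
  constructor <;> intro h <;> linarith

theorem minkowski_of_obtuse_superbase_dim2_general
    (v0 v1 v2 : EuclideanSpace ℝ (Fin 2))
    (hsum : v0 + v1 + v2 = 0)
    (h12 : (inner ℝ v1 v2 : ℝ) ≤ 0)
    (hord2 : ‖v2‖ ≤ ‖v0‖) :
    2 * |(inner ℝ v1 v2 : ℝ)| ≤ ‖v1‖ ^ 2 := by
  have hv0 : v0 = -(v1 + v2) := eq_neg_of_add_eq_zero_left (by rwa [← add_assoc])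
  rw [hv0, norm_neg, norm_le_norm_add_iff_neg_two_mul_inner_le] at hord2
  rwa [abs_of_nonpos h12, mul_neg]

theorem minkowski_of_obtuse_superbase_dim2
    (v0 v1 v2 : EuclideanSpace ℝ (Fin 2))
    (hsum : v0 + v1 + v2 = 0) (hne : v1 ≠ 0)
    (h01 : (inner ℝ v0 v1 : ℝ) ≤ 0) (h02 : (inner ℝ v0 v2 : ℝ) ≤ 0)
    (h12 : (inner ℝ v1 v2 : ℝ) ≤ 0)
    (hord1 : ‖v1‖ ≤ ‖v2‖) (hord2 : ‖v2‖ ≤ ‖v0‖) :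
    2 * |(inner ℝ v1 v2 : ℝ)| ≤ ‖v1‖ ^ 2 :=
  minkowski_of_obtuse_superbase_dim2_general v0 v1 v2 hsum h12 hord2
end

section
/- For a two-dimensional lattice with Minkowski-reduced basis {(1,0),(a,b)} where -1/2 ≤ a ≤ 0, b > 0, and a² + b² ≥ 1, the error probability P_e = (-a - a²)/(4b²) satisfies 0 ≤ P_e ≤ 1/12. Moreover P_e = 0 iff a = 0, and P_e = 1/12 iff (a,b) = (-1/2, √3/2). -/
/-! The numerator `-a - a²` equals `1/4 - (a + 1/2)²`, so it is at most `1/4`, with equality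
only at `a = -1/2`; on `[-1/2, 0]` it is `-a (1 + a) ≥ 0`, vanishing only at `a = 0`.
Since `a² ≤ 1/4`, the reduction condition `a² + b² ≥ 1` forces `b² ≥ 3/4`, so the
denominator `4 b²` is at least `3`. Both bounds are attained together exactly at
`(a, b) = (-1/2, √3/2)`. -/

section Numerator

variable {K : Type*} [Field K] [LinearOrder K] [IsStrictOrderedRing K] {a : K}

lemma neg_sub_sq_eq_quarter_sub_sq (a : K) : -a - a ^ 2 = 1 / 4 - (a + 1 / 2) ^ 2 := by ring

lemma neg_sub_sq_le_quarter (a : K) : -a - a ^ 2 ≤ 1 / 4 := by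
  rw [neg_sub_sq_eq_quarter_sub_sq]
  linarith [sq_nonneg (a + 1 / 2)]

lemma neg_sub_sq_eq_quarter_iff : -a - a ^ 2 = 1 / 4 ↔ a = -(1 / 2) := by
  rw [neg_sub_sq_eq_quarter_sub_sq, sub_eq_self, sq_eq_zero_iff, add_eq_zero_iff_eq_neg]

lemma neg_sub_sq_nonneg (ha1 : -1 ≤ a) (ha2 : a ≤ 0) : 0 ≤ -a - a ^ 2 := by
  nlinarith

lemma neg_sub_sq_eq_zero_iff (ha1 : -1 < a) : -a - a ^ 2 = 0 ↔ a = 0 := by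
  have hfac : -a - a ^ 2 = -a * (1 + a) := by ring
  rw [hfac, mul_eq_zero, neg_eq_zero, or_iff_left (by linarith)]

lemma three_quarters_le_sq_of_reduced {b : K} (ha1 : -(1 / 2) ≤ a) (ha2 : a ≤ 0)
    (hmink : 1 ≤ a ^ 2 + b ^ 2) : 3 / 4 ≤ b ^ 2 := by
  nlinarith

end Numerator

/-- Error probability of Babai's nearest-plane decoder for the lattice basis `{(1,0), (a,b)}`. -/
noncomputable def babaiErrorProb (a b : ℝ) : ℝ := (-a - a ^ 2) / (4 * b ^ 2)

section ErrorProb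

variable {a b : ℝ}

lemma babaiErrorProb_nonneg (ha1 : -(1 / 2) ≤ a) (ha2 : a ≤ 0) : 0 ≤ babaiErrorProb a b :=
  div_nonneg (neg_sub_sq_nonneg (by linarith) ha2) (by positivity)

lemma babaiErrorProb_eq_zero_iff (ha1 : -(1 / 2) ≤ a) (hb : 0 < b) :
    babaiErrorProb a b = 0 ↔ a = 0 := by
  rw [babaiErrorProb, div_eq_zero_iff, or_iff_left (by positivity)]
  exact neg_sub_sq_eq_zero_iff (by linarith)

lemma babaiErrorProb_le_one_div_sixteen_mul_sq (hb : 0 < b) : babaiErrorProb a b ≤ 1 / (16 * b ^ 2) := by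
  calc babaiErrorProb a b ≤ (1 / 4) / (4 * b ^ 2) := by
        unfold babaiErrorProb
        gcongr
        exact neg_sub_sq_le_quarter a
    _ = 1 / (16 * b ^ 2) := by field_simp; ring

lemma one_div_sixteen_mul_sq_le_one_twelfth (hb : 3 / 4 ≤ b ^ 2) : 1 / (16 * b ^ 2) ≤ 1 / 12 := by
  gcongr
  linarith

lemma babaiErrorProb_le_one_twelfth (ha1 : -(1 / 2) ≤ a) (ha2 : a ≤ 0) (hb : 0 < b)
    (hmink : 1 ≤ a ^ 2 + b ^ 2) : babaiErrorProb a b ≤ 1 / 12 :=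
  (babaiErrorProb_le_one_div_sixteen_mul_sq hb).trans
    (one_div_sixteen_mul_sq_le_one_twelfth (three_quarters_le_sq_of_reduced ha1 ha2 hmink))

lemma babaiErrorProb_eq_one_twelfth_iff (ha1 : -(1 / 2) ≤ a) (ha2 : a ≤ 0) (hb : 0 < b)
    (hmink : 1 ≤ a ^ 2 + b ^ 2) :
    babaiErrorProb a b = 1 / 12 ↔ a = -(1 / 2) ∧ b = Real.sqrt 3 / 2 := by
  have hb2 : 0 < 4 * b ^ 2 := by positivity
  have hsqrt3 : Real.sqrt 3 ^ 2 = 3 := Real.sq_sqrt (by norm_num)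
  constructor
  · intro h
    have hbsq : b ^ 2 = 3 / 4 := by
      have hlow := three_quarters_le_sq_of_reduced ha1 ha2 hmink
      have hup : 1 / 12 ≤ 1 / (16 * b ^ 2) := h ▸ babaiErrorProb_le_one_div_sixteen_mul_sq hb
      rw [div_le_div_iff₀ (by norm_num) (by positivity)] at hup
      linarith
    have hnum : -a - a ^ 2 = 1 / 4 := by
      rw [babaiErrorProb, div_eq_iff hb2.ne', hbsq] at h
      linarith
    refine ⟨neg_sub_sq_eq_quarter_iff.mp hnum, ?_⟩
    rw [← Real.sqrt_sq hb.le, hbsq, Real.sqrt_div' _ (by norm_num : (0 : ℝ) ≤ 4),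
      show (4 : ℝ) = 2 ^ 2 by norm_num, Real.sqrt_sq (by norm_num)]
  · rintro ⟨rfl, rfl⟩
    rw [babaiErrorProb, div_pow, hsqrt3]
    norm_num

end ErrorProb

theorem error_probability_bounds_dim2
    (a b : ℝ) (ha1 : -(1/2 : ℝ) ≤ a) (ha2 : a ≤ 0) (hb : 0 < b)
    (hmink : 1 ≤ a ^ 2 + b ^ 2) :
    0 ≤ (-a - a ^ 2) / (4 * b ^ 2) ∧
    (-a - a ^ 2) / (4 * b ^ 2) ≤ 1 / 12 ∧
    ((-a - a ^ 2) / (4 * b ^ 2) = 0 ↔ a = 0) ∧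
    ((-a - a ^ 2) / (4 * b ^ 2) = 1 / 12 ↔ a = -(1/2 : ℝ) ∧ b = Real.sqrt 3 / 2) :=
  ⟨babaiErrorProb_nonneg ha1 ha2,
    babaiErrorProb_le_one_twelfth ha1 ha2 hb hmink,
    babaiErrorProb_eq_zero_iff ha1 hb,
    babaiErrorProb_eq_one_twelfth_iff ha1 ha2 hb hmink⟩
end

section
/- The lattice A_n with generator matrix V = I_n + (c_n/n)·J_n, where c_n = -1 + √(n+1) and J_n is the all-ones n×n matrix, has QR decomposition whose upper-triangular factor has diagonal entries r_kk = √((k+1)/k) for k = 1, ..., n. -/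
/-!
With `a = (-1 + √(n + 1)) / n` we have `1 + n a = √(n + 1)`, hence `2a + n a² = 1` and
`Vᵀ V = (1 + a J)² = 1 + J`. The Gram matrix `1 + J` has an explicit Cholesky factor `R`, with
`R k k = √((k + 2) / (k + 1))` and `R k j = 1 / √((k + 1) (k + 2))` above the diagonal; the squares
of the latter telescope, `∑_{k < i} 1 / ((k + 1) (k + 2)) = i / (i + 1)`, which gives `Rᵀ R = 1 + J`.
Then `Q = V R⁻¹` is orthogonal and `V = Q R`.
-/

open Matrix Finset

section
variable {m α : Type*} [Fintype m] [DecidableEq m]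

lemma Matrix.mul_nonsing_inv_mul_transpose_eq_one [CommRing α] {V R : Matrix m m α}
    (hR : IsUnit R.det) (hVR : Vᵀ * V = Rᵀ * R) : V * R⁻¹ * (V * R⁻¹)ᵀ = 1 := by
  rw [mul_eq_one_comm]
  calc (V * R⁻¹)ᵀ * (V * R⁻¹) = R⁻¹ᵀ * (Vᵀ * V) * R⁻¹ := by
        rw [transpose_mul]; noncomm_ring
    _ = (R * R⁻¹)ᵀ * (R * R⁻¹) := by rw [hVR, transpose_mul]; noncomm_ring
    _ = 1 := by rw [mul_nonsing_inv R hR, transpose_one, one_mul]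

lemma Matrix.transpose_mul_self_one_add_smul_allOnes [CommRing α] (a : α) :
    (1 + a • of fun _ _ : m => (1 : α))ᵀ * (1 + a • of fun _ _ : m => (1 : α)) =
      1 + (2 * a + Fintype.card m * a ^ 2) • of fun _ _ : m => (1 : α) := by
  ext i j
  simp only [smul_of, transpose_add, transpose_one, mul_apply, Matrix.add_apply, one_apply,
    transpose_apply, of_apply, Pi.smul_apply, smul_eq_mul, mul_one, mul_add, mul_ite, mul_zero,
    add_mul, ite_mul, one_mul, zero_mul, sum_add_distrib, sum_ite_eq', sum_ite_eq, mem_univ,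
    if_true, sum_const, card_univ, nsmul_eq_mul]
  ring

end

lemma sum_range_one_div_succ_mul_succ_succ (m : ℕ) :
    ∑ k ∈ range m, 1 / (((k : ℝ) + 1) * ((k : ℝ) + 2)) = m / (m + 1) := by
  induction m with
  | zero => simp
  | succ m ih =>
    rw [sum_range_succ, ih]
    push_cast
    field_simp
    ring

noncomputable def onesCholeskyEntry (k j : ℕ) : ℝ :=
  if k = j then √((k + 2) / (k + 1)) else if k < j then 1 / √((k + 1) * (k + 2)) else 0

lemma onesCholeskyEntry_self (k : ℕ) : onesCholeskyEntry k k = √((k + 2) / (k + 1)) := by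
  simp [onesCholeskyEntry]

lemma onesCholeskyEntry_of_lt {k j : ℕ} (h : j < k) : onesCholeskyEntry k j = 0 := by
  simp [onesCholeskyEntry, h.ne', h.not_gt]

lemma onesCholeskyEntry_mul_of_lt_of_le {k i j : ℕ} (hki : k < i) (hij : i ≤ j) :
    onesCholeskyEntry k i * onesCholeskyEntry k j = 1 / ((k + 1) * (k + 2)) := by
  have hkj : k < j := hki.trans_le hij
  simp only [onesCholeskyEntry, if_neg hki.ne, if_pos hki, if_neg hkj.ne, if_pos hkj]
  rw [div_mul_div_comm, one_mul, Real.mul_self_sqrt (by positivity)]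

lemma onesCholeskyEntry_self_mul_of_le {i j : ℕ} (hij : i ≤ j) :
    onesCholeskyEntry i i * onesCholeskyEntry i j = (if i = j then 1 else 0) + 1 / (i + 1) := by
  rw [onesCholeskyEntry_self]
  rcases hij.eq_or_lt with rfl | hij
  · rw [onesCholeskyEntry_self, Real.mul_self_sqrt (by positivity), if_pos rfl]
    field_simp
    ring
  · simp only [onesCholeskyEntry, if_neg hij.ne, if_pos hij, zero_add]
    rw [mul_one_div, ← Real.sqrt_div (by positivity)]
    have hsq : ((i + 2) / (i + 1)) / ((i + 1) * (i + 2)) = (1 / ((i : ℝ) + 1)) ^ 2 := by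
      field_simp
    rw [hsq, Real.sqrt_sq (by positivity)]

lemma sum_range_onesCholeskyEntry_mul_of_le {i j m : ℕ} (hij : i ≤ j) (hjm : j < m) :
    ∑ k ∈ range m, onesCholeskyEntry k i * onesCholeskyEntry k j = (if i = j then 1 else 0) + 1 := by
  have hsub : range (i + 1) ⊆ range m := range_subset_range.mpr (by omega)
  rw [← sum_subset hsub fun k _ hk => ?_, sum_range_succ,
    sum_congr rfl fun k hk => onesCholeskyEntry_mul_of_lt_of_le (mem_range.mp hk) hij,
    sum_range_one_div_succ_mul_succ_succ, onesCholeskyEntry_self_mul_of_le hij]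
  · field_simp
    ring
  · rw [onesCholeskyEntry_of_lt (by rw [mem_range] at hk; omega), zero_mul]

noncomputable def onesCholesky (n : ℕ) : Matrix (Fin n) (Fin n) ℝ :=
  of fun k j => onesCholeskyEntry k j

lemma onesCholesky_blockTriangular (n : ℕ) : (onesCholesky n).BlockTriangular id :=
  fun _ _ h => onesCholeskyEntry_of_lt h

lemma onesCholesky_apply_self {n : ℕ} (k : Fin n) :
    onesCholesky n k k = √((k + 2) / (k + 1)) :=
  onesCholeskyEntry_self k

lemma onesCholesky_apply_self_pos {n : ℕ} (k : Fin n) : 0 < onesCholesky n k k := by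
  rw [onesCholesky_apply_self]
  positivity

lemma isUnit_det_onesCholesky (n : ℕ) : IsUnit (onesCholesky n).det := by
  rw [det_of_isUpperTriangular (onesCholesky_blockTriangular n)]
  exact (prod_pos fun k _ => onesCholesky_apply_self_pos k).ne'.isUnit

lemma transpose_mul_onesCholesky (n : ℕ) :
    (onesCholesky n)ᵀ * onesCholesky n = 1 + of fun _ _ => 1 := by
  ext i j
  simp only [mul_apply, transpose_apply, onesCholesky, of_apply, Matrix.add_apply, one_apply,
    ← Fin.val_inj]
  rw [Fin.sum_univ_eq_sum_range (fun k => onesCholeskyEntry k i * onesCholeskyEntry k j)]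
  rcases le_total (i : ℕ) j with h | h
  · exact sum_range_onesCholeskyEntry_mul_of_le h j.isLt
  · simp_rw [mul_comm (onesCholeskyEntry _ i), eq_comm (a := (i : ℕ))]
    exact sum_range_onesCholeskyEntry_mul_of_le h i.isLt

lemma two_mul_add_mul_sq_eq_one {n : ℕ} (hn : 0 < n) :
    2 * ((-1 + √(n + 1)) / n) + n * ((-1 + √(n + 1)) / n) ^ 2 = (1 : ℝ) := by
  have hs : √((n : ℝ) + 1) ^ 2 = n + 1 := Real.sq_sqrt (by positivity)
  field_simp
  linear_combination hs

theorem qr_diagonal_of_An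
    (n : ℕ) (hn : 0 < n)
    (V : Matrix (Fin n) (Fin n) ℝ)
    (hV : V = 1 + ((-1 + Real.sqrt (n + 1)) / n) • (Matrix.of fun _ _ => (1 : ℝ))) :
    ∃ Q R : Matrix (Fin n) (Fin n) ℝ,
      Q * Q.transpose = 1 ∧
      R.BlockTriangular id ∧
      (∀ k, 0 < R k k) ∧
      V = Q * R ∧
      ∀ k : Fin n, R k k = Real.sqrt (((k : ℝ) + 2) / ((k : ℝ) + 1)) := by
  set R := onesCholesky n
  have hR := isUnit_det_onesCholesky n
  have hgram : Vᵀ * V = Rᵀ * R := by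
    rw [transpose_mul_onesCholesky, hV, transpose_mul_self_one_add_smul_allOnes,
      Fintype.card_fin, two_mul_add_mul_sq_eq_one hn, one_smul]
  refine ⟨V * R⁻¹, R, mul_nonsing_inv_mul_transpose_eq_one hR hgram,
    onesCholesky_blockTriangular n, onesCholesky_apply_self_pos, ?_, onesCholesky_apply_self⟩
  rw [Matrix.mul_assoc, nonsing_inv_mul R hR, Matrix.mul_one]
end

section
/- For all n ≥ 1, (1/12)(n + H_n) < r²(n), where H_n is the n-th harmonic number and r²(n) = (1/2)·(2⌊(n+1)/2⌋(n+1-⌊(n+1)/2⌋))/(n+1) is the squared covering radius of the lattice A_n. -/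
/-
Each term of `H_n` is at most `1`, so the left side is at most `n / 6`. Splitting `n + 1` into
`⌊(n+1)/2⌋` and `⌈(n+1)/2⌉` shows that the right side is at least `n (n + 2) / (4 (n + 1))`,
which exceeds `n / 6` as soon as `n ≥ 1`.
-/

open Finset

lemma sum_range_one_div_succ_le (n : ℕ) : ∑ i ∈ range n, 1 / ((i : ℝ) + 1) ≤ n := by
  calc ∑ i ∈ range n, 1 / ((i : ℝ) + 1) ≤ ∑ _i ∈ range n, (1 : ℝ) :=
        sum_le_sum fun i _ => div_le_one_of_le₀ (by linarith [i.cast_nonneg (α := ℝ)]) (by positivity)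
    _ = n := by simp

lemma sq_le_four_mul_half_mul_sub_half_add_one (m : ℕ) :
    (m : ℝ) ^ 2 ≤ 4 * ((m / 2 : ℕ) : ℝ) * ((m : ℝ) - ((m / 2 : ℕ) : ℝ)) + 1 := by
  obtain ⟨k, rfl | rfl⟩ := Nat.even_or_odd' m
  · rw [Nat.mul_div_cancel_left k two_pos]
    push_cast
    nlinarith
  · rw [show (2 * k + 1) / 2 = k by omega]
    push_cast
    nlinarith

theorem chebyshev_condition_fails_for_An (n : ℕ) (hn : 1 ≤ n) :
    (1 / 12 : ℝ) * ((n : ℝ) + ∑ i ∈ Finset.range n, 1 / ((i : ℝ) + 1))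
      < (1 / 2 : ℝ) *
          (2 * ((((n + 1) / 2 : ℕ) : ℝ)) * ((n : ℝ) + 1 - (((n + 1) / 2 : ℕ) : ℝ)))
          / ((n : ℝ) + 1) := by
  have hn_pos : (1 : ℝ) ≤ n := by exact_mod_cast hn
  have h_harmonic := sum_range_one_div_succ_le n
  have h_split := sq_le_four_mul_half_mul_sub_half_add_one (n + 1)
  push_cast at h_split
  rw [lt_div_iff₀ (by positivity)]
  nlinarith
end

section
/- The Voronoi cell of the 2D lattice with Minkowski-reduced basis {(1,0),(a,b)}, -1/2 ≤ a ≤ 0 < b, a²+b² ≥ 1, is a hexagon with vertices ±(1/2, (a²+b²+a)/(2b)), ±(-1/2, (a²+b²+a)/(2b)), ±((2a+1)/2, (b²-a²-a)/(2b)), and its area equals b. -/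
/-!
Put `u = (1, 0)` and `v = (a, b)`. The hypotheses make `u, v, -(u + v)` an obtuse superbase:
`⟪u, v⟫ ≤ 0` while `⟪u, u + v⟫ ≥ 0` and `⟪u + v, v⟫ ≥ 0`. Every lattice vector is then a
nonnegative integer combination `i p + j q` of two cyclically adjacent vectors among
`u, u + v, v, -u, -(u + v), -v`, and `⟪p, q⟫ ≥ 0` turns the inequalities `2⟪x, p⟫ ≤ ‖p‖²` and
`2⟪x, q⟫ ≤ ‖q‖²` into `2⟪x, i p + j q⟫ ≤ ‖i p + j q‖²`. So the Voronoi cell is the intersection of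
the three slabs `2|⟪x, r⟫| ≤ ‖r‖²`, `r = u, v, u + v`.

Each linear functional attains its maximum over this intersection at the common vertex of two
adjacent edges whose normals span a cone containing the functional, so by Hahn–Banach the
intersection is the convex hull of the six vertices. Its area follows from Fubini: the vertical
slice over `x ∈ [-1/2, 1/2]` has length `h x + h (-x)`, where `h` is the upper boundary, and
`∫ h = b / 2`.
-/

open MeasureTheory Set

open scoped RealInnerProductSpace

theorem two_mul_abs_le_iff {t c : ℝ} : 2 * |t| ≤ c ↔ -c ≤ 2 * t ∧ 2 * t ≤ c := by
  rw [← abs_le, abs_mul, abs_two]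

theorem integral_const_sub_mul (p q c e : ℝ) :
    ∫ x in p..q, (c - e * x) = (q - p) * c - e * ((q ^ 2 - p ^ 2) / 2) := by
  rw [intervalIntegral.integral_sub intervalIntegrable_const
    (intervalIntegral.intervalIntegrable_id.const_mul e), intervalIntegral.integral_const_mul]
  simp

theorem volume_regionBetween_Icc_eq_integral {α : Type*} [MeasurableSpace α] {μ : Measure α}
    {f g : α → ℝ} {s : Set α} (hf : Measurable f) (hg : Measurable g) (hs : MeasurableSet s)
    (hint : IntegrableOn (fun x => g x - f x) s μ) (hfg : ∀ x ∈ s, f x ≤ g x) :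
    μ.prod volume {p : α × ℝ | p.1 ∈ s ∧ p.2 ∈ Icc (f p.1) (g p.1)} =
      ENNReal.ofReal (∫ x in s, g x - f x ∂μ) := by
  rw [Measure.prod_apply (measurableSet_region_between_cc hf hg hs)]
  have hslice : (fun x => volume (Prod.mk x ⁻¹' {p : α × ℝ | p.1 ∈ s ∧ p.2 ∈ Icc (f p.1) (g p.1)}))
      = s.indicator fun x => ENNReal.ofReal (g x - f x) := by
    funext x
    by_cases hx : x ∈ s
    · simp [hx, ← Real.volume_Icc, Icc]
    · simp [hx]
  rw [hslice, lintegral_indicator hs, ofReal_integral_eq_lintegral_ofReal hint]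
  exact (ae_restrict_iff' hs).mpr
    (Filter.Eventually.of_forall fun x hx => sub_nonneg.mpr (hfg x hx))

section InnerProductSpace

variable {E : Type*} [NormedAddCommGroup E] [InnerProductSpace ℝ E]

def voronoiCell (Λ : Set E) : Set E := {x | ∀ l ∈ Λ, ‖x‖ ≤ ‖x - l‖}

theorem norm_le_norm_sub_iff_two_inner_le (x l : E) :
    ‖x‖ ≤ ‖x - l‖ ↔ 2 * ⟪x, l⟫ ≤ ‖l‖ ^ 2 := by
  rw [← sq_le_sq₀ (norm_nonneg _) (norm_nonneg _), norm_sub_sq_real]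
  constructor <;> intro h <;> linarith

theorem convex_voronoiCell (Λ : Set E) : Convex ℝ (voronoiCell Λ) := by
  have : voronoiCell Λ = ⋂ l ∈ Λ, {x | innerₛₗ ℝ l x ≤ ‖l‖ ^ 2 / 2} := by
    ext x
    simp only [voronoiCell, norm_le_norm_sub_iff_two_inner_le, innerₛₗ_apply_apply,
      real_inner_comm, le_div_iff₀' (two_pos (α := ℝ)), mem_ofPred_eq, mem_iInter]
  rw [this]
  exact convex_iInter₂ fun l _ => convex_halfSpace_le (innerₛₗ ℝ l).isLinear _

theorem two_inner_le_norm_sq_zsmul_add_zsmul_of_inner_nonneg {x p q : E} {i j : ℤ}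
    (hi : 0 ≤ i) (hj : 0 ≤ j) (hp : 2 * ⟪x, p⟫ ≤ ‖p‖ ^ 2) (hq : 2 * ⟪x, q⟫ ≤ ‖q‖ ^ 2)
    (hpq : 0 ≤ ⟪p, q⟫) :
    2 * ⟪x, i • p + j • q⟫ ≤ ‖i • p + j • q‖ ^ 2 := by
  have hi' : (i : ℝ) ≤ (i : ℝ) ^ 2 := by exact_mod_cast i.le_self_sq
  have hj' : (j : ℝ) ≤ (j : ℝ) ^ 2 := by exact_mod_cast j.le_self_sq
  have hi0 : (0 : ℝ) ≤ i := by exact_mod_cast hi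
  have hj0 : (0 : ℝ) ≤ j := by exact_mod_cast hj
  simp only [← Int.cast_smul_eq_zsmul ℝ, norm_add_sq_real, norm_smul, inner_add_right,
    real_inner_smul_left, real_inner_smul_right, mul_pow, Real.norm_eq_abs, sq_abs]
  nlinarith [mul_le_mul_of_nonneg_left hp hi0, mul_le_mul_of_nonneg_left hq hj0,
    mul_le_mul_of_nonneg_right hi' (sq_nonneg ‖p‖),
    mul_le_mul_of_nonneg_right hj' (sq_nonneg ‖q‖), mul_nonneg (mul_nonneg hi0 hj0) hpq]

theorem two_inner_le_norm_sq_of_abs_le {x p : E} (h : 2 * |⟪x, p⟫| ≤ ‖p‖ ^ 2) :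
    2 * ⟪x, p⟫ ≤ ‖p‖ ^ 2 ∧ 2 * ⟪x, -p⟫ ≤ ‖-p‖ ^ 2 := by
  rw [inner_neg_right, norm_neg, mul_neg, neg_le]
  exact (two_mul_abs_le_iff.mp h).symm

variable {u v x : E}

-- The vectors `m • u + k • v` with `k ≥ 0` fill the cones spanned by `(u, u + v)`, `(u + v, v)`
-- and `(v, -u)`.
theorem two_inner_le_norm_sq_zsmul_add_zsmul_of_obtuse (huv : ⟪u, v⟫ ≤ 0)
    (hu : -⟪u, v⟫ ≤ ‖u‖ ^ 2) (hv : -⟪u, v⟫ ≤ ‖v‖ ^ 2) (hxu : 2 * |⟪x, u⟫| ≤ ‖u‖ ^ 2)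
    (hxv : 2 * |⟪x, v⟫| ≤ ‖v‖ ^ 2) (hxuv : 2 * |⟪x, u + v⟫| ≤ ‖u + v‖ ^ 2) {m k : ℤ}
    (hk : 0 ≤ k) :
    2 * ⟪x, m • u + k • v⟫ ≤ ‖m • u + k • v‖ ^ 2 := by
  obtain ⟨hxu, hxu'⟩ := two_inner_le_norm_sq_of_abs_le hxu
  obtain ⟨hxv, -⟩ := two_inner_le_norm_sq_of_abs_le hxv
  obtain ⟨hxuv, -⟩ := two_inner_le_norm_sq_of_abs_le hxuv
  rcases le_total k m with hkm | hmk
  · have hcone : 0 ≤ ⟪u, u + v⟫ := by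
      rw [inner_add_right, real_inner_self_eq_norm_sq]; linarith
    rw [show m • u + k • v = (m - k) • u + k • (u + v) by module]
    exact two_inner_le_norm_sq_zsmul_add_zsmul_of_inner_nonneg (by omega) hk hxu hxuv hcone
  rcases le_or_gt 0 m with hm | hm
  · have hcone : 0 ≤ ⟪u + v, v⟫ := by
      rw [inner_add_left, real_inner_self_eq_norm_sq]; linarith
    rw [show m • u + k • v = m • (u + v) + (k - m) • v by module]
    exact two_inner_le_norm_sq_zsmul_add_zsmul_of_inner_nonneg hm (by omega) hxuv hxv hcone
  · have hcone : 0 ≤ ⟪-u, v⟫ := by rw [inner_neg_left]; linarith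
    rw [show m • u + k • v = (-m) • (-u) + k • v by module]
    exact two_inner_le_norm_sq_zsmul_add_zsmul_of_inner_nonneg (by omega) hk hxu' hxv hcone

theorem forall_norm_le_norm_sub_zsmul_add_zsmul_iff (huv : ⟪u, v⟫ ≤ 0)
    (hu : -⟪u, v⟫ ≤ ‖u‖ ^ 2) (hv : -⟪u, v⟫ ≤ ‖v‖ ^ 2) :
    (∀ m k : ℤ, ‖x‖ ≤ ‖x - (m • u + k • v)‖) ↔
      2 * |⟪x, u⟫| ≤ ‖u‖ ^ 2 ∧ 2 * |⟪x, v⟫| ≤ ‖v‖ ^ 2 ∧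
        2 * |⟪x, u + v⟫| ≤ ‖u + v‖ ^ 2 := by
  simp only [norm_le_norm_sub_iff_two_inner_le]
  constructor
  · intro h
    have h₁ := h 1 0; have h₂ := h (-1) 0; have h₃ := h 0 1
    have h₄ := h 0 (-1); have h₅ := h 1 1; have h₆ := h (-1) (-1)
    simp only [one_smul, zero_smul, add_zero, zero_add, neg_smul, ← neg_add, inner_neg_right,
      norm_neg] at h₁ h₂ h₃ h₄ h₅ h₆
    refine ⟨?_, ?_, ?_⟩ <;> rw [two_mul_abs_le_iff] <;> constructor <;> linarith
  · rintro ⟨hxu, hxv, hxuv⟩ m k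
    rcases le_total 0 k with hk | hk
    · exact two_inner_le_norm_sq_zsmul_add_zsmul_of_obtuse huv hu hv hxu hxv hxuv hk
    · have hneg := two_inner_le_norm_sq_zsmul_add_zsmul_of_obtuse (x := -x) (m := -m)
        huv hu hv (by rwa [inner_neg_left, abs_neg]) (by rwa [inner_neg_left, abs_neg])
        (by rwa [inner_neg_left, abs_neg]) (neg_nonneg.mpr hk)
      rwa [neg_smul, neg_smul, ← neg_add, inner_neg_neg, norm_neg] at hneg

theorem mem_convexHull_of_forall_exists_inner_le [CompleteSpace E] {S : Set E} (hS : S.Finite)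
    {x : E} (h : ∀ w : E, ∃ s ∈ S, ⟪w, x⟫ ≤ ⟪w, s⟫) : x ∈ convexHull ℝ S := by
  by_contra hx
  obtain ⟨f, c, hfS, hfx⟩ := geometric_hahn_banach_closed_point (convex_convexHull ℝ S)
    (hS.isClosed_convexHull (𝕜 := ℝ)) hx
  obtain ⟨s, hs, hle⟩ := h ((InnerProductSpace.toDual ℝ E).symm f)
  simp only [InnerProductSpace.toDual_symm_apply] at hle
  linarith [hfS s (subset_convexHull ℝ S hs)]

end InnerProductSpace

def planeLattice (a b : ℝ) : Set (EuclideanSpace ℝ (Fin 2)) :=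
  {x | ∃ m k : ℤ, x 0 = m + k * a ∧ x 1 = k * b}

-- In the coordinates of `EuclideanSpace ℝ (Fin 2)`: the slabs `2 |⟪p, r⟫| ≤ ‖r‖ ^ 2` for
-- `r = (1, 0), (a, b), (1 + a, b)`.
def slabHexagon (a b : ℝ) : Set (ℝ × ℝ) :=
  {p | 2 * |p.1| ≤ 1 ∧ 2 * |a * p.1 + b * p.2| ≤ a ^ 2 + b ^ 2 ∧
    2 * |(1 + a) * p.1 + b * p.2| ≤ (1 + a) ^ 2 + b ^ 2}

noncomputable def slabHexagonTop (a b x : ℝ) : ℝ :=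
  min (((a ^ 2 + b ^ 2) / 2 - a * x) / b) ((((1 + a) ^ 2 + b ^ 2) / 2 - (1 + a) * x) / b)

def hexagonVertices (a b : ℝ) : Set (EuclideanSpace ℝ (Fin 2)) :=
  let s := (a ^ 2 + b ^ 2 + a) / (2 * b)
  let t := (b ^ 2 - a ^ 2 - a) / (2 * b)
  {!₂[1 / 2, s], !₂[-(1 / 2), -s], !₂[-(1 / 2), s], !₂[1 / 2, -s],
    !₂[(2 * a + 1) / 2, t], !₂[-((2 * a + 1) / 2), -t]}

section

variable {a b : ℝ}

theorem mem_planeLattice_iff {l : EuclideanSpace ℝ (Fin 2)} :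
    l ∈ planeLattice a b ↔ ∃ m k : ℤ, m • !₂[1, 0] + k • !₂[a, b] = l := by
  refine exists₂_congr fun m k => ⟨fun ⟨h₀, h₁⟩ => ?_, ?_⟩
  · ext i; fin_cases i <;> simp [h₀, h₁]
  · rintro rfl; simp

theorem mem_voronoiCell_planeLattice_iff (ha₁ : -1 ≤ a) (ha₂ : a ≤ 0)
    (hab : -a ≤ a ^ 2 + b ^ 2) {x : EuclideanSpace ℝ (Fin 2)} :
    x ∈ voronoiCell (planeLattice a b) ↔ (x 0, x 1) ∈ slabHexagon a b := by
  have hsum : (!₂[1, 0] + !₂[a, b] : EuclideanSpace ℝ (Fin 2)) = !₂[1 + a, b] := by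
    ext i; fin_cases i <;> simp
  simp only [voronoiCell, mem_planeLattice_iff, mem_ofPred_eq, forall_exists_index,
    forall_comm (α := EuclideanSpace ℝ (Fin 2)), forall_eq']
  rw [forall_norm_le_norm_sub_zsmul_add_zsmul_iff] <;>
    simp [hsum, slabHexagon, PiLp.inner_apply, Fin.sum_univ_two, EuclideanSpace.norm_sq_eq] <;>
    linarith

theorem neg_mem_slabHexagon {p : ℝ × ℝ} (hp : p ∈ slabHexagon a b) : -p ∈ slabHexagon a b := by
  obtain ⟨h₁, h₂, h₃⟩ := hp
  refine ⟨?_, ?_, ?_⟩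
  · rwa [Prod.fst_neg, abs_neg]
  · rwa [Prod.fst_neg, Prod.snd_neg, ← abs_neg, neg_add, ← mul_neg, ← mul_neg, neg_neg, neg_neg]
  · rwa [Prod.fst_neg, Prod.snd_neg, ← abs_neg, neg_add, ← mul_neg, ← mul_neg, neg_neg, neg_neg]

theorem vertices_mem_slabHexagon (ha₁ : -1 ≤ a) (ha₂ : a ≤ 0) (hb : 0 < b)
    (hab : -a ≤ a ^ 2 + b ^ 2) :
    (1 / 2, (a ^ 2 + b ^ 2 + a) / (2 * b)) ∈ slabHexagon a b ∧
      (-(1 / 2), (a ^ 2 + b ^ 2 + a) / (2 * b)) ∈ slabHexagon a b ∧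
      ((2 * a + 1) / 2, (b ^ 2 - a ^ 2 - a) / (2 * b)) ∈ slabHexagon a b := by
  have hs : b * ((a ^ 2 + b ^ 2 + a) / (2 * b)) = (a ^ 2 + b ^ 2 + a) / 2 := by field_simp
  have ht : b * ((b ^ 2 - a ^ 2 - a) / (2 * b)) = (b ^ 2 - a ^ 2 - a) / 2 := by field_simp
  simp only [slabHexagon, mem_ofPred_eq, two_mul_abs_le_iff, hs, ht]
  refine ⟨⟨?_, ?_, ?_⟩, ⟨?_, ?_, ?_⟩, ?_, ?_, ?_⟩ <;> constructor <;> nlinarith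

theorem slabHexagon_support (hb : 0 < b) {p : ℝ × ℝ} (hp : p ∈ slabHexagon a b) {c d : ℝ}
    (hd : 0 ≤ d) :
    c * p.1 + d * p.2 ≤ c * (1 / 2) + d * ((a ^ 2 + b ^ 2 + a) / (2 * b)) ∨
      c * p.1 + d * p.2 ≤ c * (-(1 / 2)) + d * ((a ^ 2 + b ^ 2 + a) / (2 * b)) ∨
      c * p.1 + d * p.2 ≤ c * ((2 * a + 1) / 2) + d * ((b ^ 2 - a ^ 2 - a) / (2 * b)) := by
  obtain ⟨h₁, h₂, h₃⟩ := hp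
  rw [two_mul_abs_le_iff] at h₁ h₂ h₃
  have hs : b * ((a ^ 2 + b ^ 2 + a) / (2 * b)) = (a ^ 2 + b ^ 2 + a) / 2 := by field_simp
  have ht : b * ((b ^ 2 - a ^ 2 - a) / (2 * b)) = (b ^ 2 - a ^ 2 - a) / 2 := by field_simp
  have hscale (q₁ q₂ : ℝ) (h : b * (c * p.1 + d * p.2) ≤ b * c * q₁ + d * (b * q₂)) :
      c * p.1 + d * p.2 ≤ c * q₁ + d * q₂ :=
    le_of_mul_le_mul_left (by linarith) hb
  -- Split by the position of `(b * c, b * d)` among the edge normals `(1, 0)`, `(1 + a, b)`,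
  -- `(a, b)`, `(-1, 0)`, and write it as a nonnegative combination of the two that enclose it.
  rcases le_or_gt (d * (1 + a)) (c * b) with h | h
  · refine .inl (hscale _ _ ?_)
    rw [hs]
    linarith [mul_nonneg (sub_nonneg.2 h) (sub_nonneg.2 h₁.2), mul_nonneg hd (sub_nonneg.2 h₃.2)]
  rcases le_or_gt (d * a) (c * b) with h' | h'
  · refine .inr (.inr (hscale _ _ ?_))
    rw [ht]
    linarith [mul_nonneg (sub_nonneg.2 h') (sub_nonneg.2 h₃.2),
      mul_nonneg (sub_nonneg.2 h.le) (sub_nonneg.2 h₂.2)]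
  · refine .inr (.inl (hscale _ _ ?_))
    rw [hs]
    linarith [mul_nonneg hd (sub_nonneg.2 h₂.2),
      mul_nonneg (sub_nonneg.2 h'.le) (sub_nonneg.2 h₁.1)]

theorem voronoiCell_planeLattice_eq_convexHull (ha₁ : -1 ≤ a) (ha₂ : a ≤ 0) (hb : 0 < b)
    (hab : -a ≤ a ^ 2 + b ^ 2) :
    voronoiCell (planeLattice a b) = convexHull ℝ (hexagonVertices a b) := by
  have hmem (x : EuclideanSpace ℝ (Fin 2)) := mem_voronoiCell_planeLattice_iff ha₁ ha₂ hab (x := x)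
  obtain ⟨hA, hB, hC⟩ := vertices_mem_slabHexagon ha₁ ha₂ hb hab
  refine Subset.antisymm (fun x hx => ?_) (convexHull_min ?_ (convex_voronoiCell _))
  · rw [hmem] at hx
    refine mem_convexHull_of_forall_exists_inner_le (by simp [hexagonVertices]) fun w => ?_
    have hinner (y : EuclideanSpace ℝ (Fin 2)) : ⟪w, y⟫ = w 0 * y 0 + w 1 * y 1 := by
      simp [PiLp.inner_apply, Fin.sum_univ_two, mul_comm]
    simp only [hinner]
    rcases le_total 0 (w 1) with hd | hd
    · rcases slabHexagon_support (c := w 0) hb hx hd with h | h | h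
      · exact ⟨_, .inl rfl, by simpa using h⟩
      · exact ⟨_, .inr <| .inr <| .inl rfl, by simpa using h⟩
      · exact ⟨_, .inr <| .inr <| .inr <| .inr <| .inl rfl, by simpa using h⟩
    · rcases slabHexagon_support (c := -w 0) hb (neg_mem_slabHexagon hx) (neg_nonneg.2 hd)
        with h | h | h
      · exact ⟨_, .inr <| .inl rfl, by simp at h ⊢; linarith⟩
      · exact ⟨_, .inr <| .inr <| .inr <| .inl rfl, by simp at h ⊢; linarith⟩
      · exact ⟨_, .inr <| .inr <| .inr <| .inr <| .inr rfl, by simp at h ⊢; linarith⟩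
  · rintro v (rfl | rfl | rfl | rfl | rfl | rfl) <;> rw [hmem]
    exacts [hA, by simpa using neg_mem_slabHexagon hA, hB, by simpa using neg_mem_slabHexagon hB,
      hC, by simpa using neg_mem_slabHexagon hC]

theorem slabHexagon_eq_regionBetween (hb : 0 < b) :
    slabHexagon a b = {p | p.1 ∈ Icc (-(1 / 2)) (1 / 2) ∧
      p.2 ∈ Icc (-slabHexagonTop a b (-p.1)) (slabHexagonTop a b p.1)} := by
  ext ⟨x, y⟩
  simp only [slabHexagon, slabHexagonTop, mem_ofPred_eq, mem_Icc, neg_le, le_min_iff,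
    le_div_iff₀ hb, two_mul_abs_le_iff, and_assoc]
  constructor <;> rintro ⟨h₁, h₂, h₃, h₄, h₅, h₆⟩ <;> refine ⟨?_, ?_, ?_, ?_, ?_, ?_⟩ <;> linarith

theorem continuous_slabHexagonTop : Continuous (slabHexagonTop a b) := by
  unfold slabHexagonTop; fun_prop

theorem slabHexagonTop_nonneg (ha₁ : -1 ≤ a) (ha₂ : a ≤ 0) (hb : 0 < b)
    (hab : -a ≤ a ^ 2 + b ^ 2) {x : ℝ} (hx : x ∈ Icc (-(1 / 2)) (1 / 2)) :
    0 ≤ slabHexagonTop a b x := by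
  obtain ⟨hx₁, hx₂⟩ := hx
  refine le_min (div_nonneg ?_ hb.le) (div_nonneg ?_ hb.le)
  · nlinarith [mul_nonneg (neg_nonneg.2 ha₂) (by linarith : 0 ≤ x + 1 / 2)]
  · nlinarith [mul_nonneg (by linarith : 0 ≤ 1 + a) (by linarith : 0 ≤ 1 / 2 - x)]

theorem integral_slabHexagonTop (ha₁ : -1 ≤ a) (ha₂ : a ≤ 0) (hb : 0 < b) :
    ∫ x in (-(1 / 2) : ℝ)..(1 / 2), slabHexagonTop a b x = b / 2 := by
  have hcont := continuous_slabHexagonTop (a := a) (b := b)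
  rw [← intervalIntegral.integral_add_adjacent_intervals (b := a + 1 / 2)
    (hcont.intervalIntegrable _ _) (hcont.intervalIntegrable _ _)]
  have h₁ : ∫ x in (-(1 / 2) : ℝ)..(a + 1 / 2), slabHexagonTop a b x =
      ∫ x in (-(1 / 2) : ℝ)..(a + 1 / 2), ((a ^ 2 + b ^ 2) / 2 - a * x) / b := by
    refine intervalIntegral.integral_congr fun x hx => min_eq_left ?_
    rw [uIcc_of_le (by linarith)] at hx
    exact div_le_div_of_nonneg_right (by linarith [hx.2]) hb.le
  have h₂ : ∫ x in (a + 1 / 2)..(1 / 2), slabHexagonTop a b x =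
      ∫ x in (a + 1 / 2)..(1 / 2), (((1 + a) ^ 2 + b ^ 2) / 2 - (1 + a) * x) / b := by
    refine intervalIntegral.integral_congr fun x hx => min_eq_right ?_
    rw [uIcc_of_le (by linarith)] at hx
    exact div_le_div_of_nonneg_right (by linarith [hx.1]) hb.le
  rw [h₁, h₂, intervalIntegral.integral_div, intervalIntegral.integral_div,
    integral_const_sub_mul, integral_const_sub_mul]
  field_simp
  ring

theorem volume_slabHexagon (ha₁ : -1 ≤ a) (ha₂ : a ≤ 0) (hb : 0 < b)
    (hab : -a ≤ a ^ 2 + b ^ 2) : volume (slabHexagon a b) = ENNReal.ofReal b := by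
  have hcont := continuous_slabHexagonTop (a := a) (b := b)
  have hcont_neg : Continuous fun x => slabHexagonTop a b (-x) := hcont.comp continuous_neg
  have hle (x : ℝ) (hx : x ∈ Icc (-(1 / 2) : ℝ) (1 / 2)) :
      -slabHexagonTop a b (-x) ≤ slabHexagonTop a b x := by
    have hx' : -x ∈ Icc (-(1 / 2) : ℝ) (1 / 2) := ⟨by linarith [hx.2], by linarith [hx.1]⟩
    linarith [slabHexagonTop_nonneg ha₁ ha₂ hb hab hx, slabHexagonTop_nonneg ha₁ ha₂ hb hab hx']
  rw [slabHexagon_eq_regionBetween hb, Measure.volume_eq_prod,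
    volume_regionBetween_Icc_eq_integral (f := fun x => -slabHexagonTop a b (-x))
      hcont_neg.neg.measurable hcont.measurable measurableSet_Icc
      (hcont.sub hcont_neg.neg).integrableOn_Icc hle,
    integral_Icc_eq_integral_Ioc, ← intervalIntegral.integral_of_le (by norm_num)]
  simp only [sub_neg_eq_add]
  rw [intervalIntegral.integral_add (hcont.intervalIntegrable _ _)
    (hcont_neg.intervalIntegrable _ _), intervalIntegral.integral_comp_neg,
    neg_neg, integral_slabHexagonTop ha₁ ha₂ hb, add_halves]

theorem volume_voronoiCell_planeLattice (ha₁ : -1 ≤ a) (ha₂ : a ≤ 0) (hb : 0 < b)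
    (hab : -a ≤ a ^ 2 + b ^ 2) :
    volume (voronoiCell (planeLattice a b)) = ENNReal.ofReal b := by
  let e := (MeasurableEquiv.toLp 2 (Fin 2 → ℝ)).symm.trans MeasurableEquiv.finTwoArrow
  have he : MeasurePreserving e volume volume :=
    (EuclideanSpace.volume_preserving_symm_measurableEquiv_toLp (Fin 2)).trans
      (volume_preserving_finTwoArrow ℝ)
  have hpre : voronoiCell (planeLattice a b) = e ⁻¹' slabHexagon a b := by
    ext x
    exact mem_voronoiCell_planeLattice_iff ha₁ ha₂ hab
  rw [hpre, he.measure_preimage_equiv, volume_slabHexagon ha₁ ha₂ hb hab]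

end

theorem voronoi_cell_hexagon_dim2
    (a b : ℝ) (ha1 : -(1/2 : ℝ) ≤ a) (ha2 : a ≤ 0) (hb : 0 < b)
    (hmink : 1 ≤ a ^ 2 + b ^ 2) :
    let pt : ℝ → ℝ → EuclideanSpace ℝ (Fin 2) :=
      fun x y => (WithLp.equiv 2 (Fin 2 → ℝ)).symm ![x, y]
    let Λ : Set (EuclideanSpace ℝ (Fin 2)) :=
      {x | ∃ m k : ℤ, x 0 = (m : ℝ) + (k : ℝ) * a ∧ x 1 = (k : ℝ) * b}
    let Vor : Set (EuclideanSpace ℝ (Fin 2)) := {x | ∀ l ∈ Λ, ‖x‖ ≤ ‖x - l‖}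
    let s : ℝ := (a ^ 2 + b ^ 2 + a) / (2 * b)
    let t : ℝ := (b ^ 2 - a ^ 2 - a) / (2 * b)
    Vor = convexHull ℝ
        {pt (1/2) s, pt (-(1/2)) (-s), pt (-(1/2)) s, pt (1/2) (-s),
          pt ((2 * a + 1) / 2) t, pt (-((2 * a + 1) / 2)) (-t)} ∧
      volume Vor = ENNReal.ofReal b := by
  intro pt Λ Vor s t
  have ha₁ : -1 ≤ a := by linarith
  have hab : -a ≤ a ^ 2 + b ^ 2 := by linarith
  exact ⟨voronoiCell_planeLattice_eq_convexHull ha₁ ha2 hb hab,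
    volume_voronoiCell_planeLattice ha₁ ha2 hb hab⟩
end

section
/- For a lattice in ℝ³ parameterized by β ∈ [0, π/6] with basis {(1,0,0),(0,1,0),(-sin β, 0, cos β)}, the packing density is π/(6 cos β), ranging from π/6 at β = 0 to π/(3√3) at β = π/6, and the minimum distance of the lattice is 1. -/
/-!
The Gram form of the basis is `u₁² + u₂² + u₃² - 2 u₁ u₃ sin β`. For `|sin β| ≤ 1/2` it
dominates the integer form `u₁² + u₂² + u₃² - |u₁ u₃|`, which is positive definite and hence
at least `1` on nonzero integer vectors; the first basis vector attains `1`. The density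
formulas are then arithmetic.
-/

lemma Int.one_le_sq_add_sq_add_sq_sub_abs_mul {a b c : ℤ} (h : ¬(a = 0 ∧ b = 0 ∧ c = 0)) :
    1 ≤ a ^ 2 + b ^ 2 + c ^ 2 - |a * c| := by
  have hpos : 0 < a ^ 2 + b ^ 2 + c ^ 2 := by
    contrapose! h
    refine ⟨?_, ?_, ?_⟩ <;> nlinarith [sq_nonneg a, sq_nonneg b, sq_nonneg c]
  -- `2 (a² + b² + c² - |ac|) = (|a| - |c|)² + a² + 2b² + c²`
  nlinarith [sq_nonneg (|a| - |c|), sq_abs a, sq_abs c, abs_mul a c, sq_nonneg b]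

lemma one_le_sq_add_sq_add_sq_of_abs_le_half {s c : ℝ} (hs : |s| ≤ 1 / 2)
    (hsc : s ^ 2 + c ^ 2 = 1) {u₁ u₂ u₃ : ℤ} (hu : ¬(u₁ = 0 ∧ u₂ = 0 ∧ u₃ = 0)) :
    1 ≤ ((u₁ : ℝ) + u₃ * (-s)) ^ 2 + (u₂ : ℝ) ^ 2 + ((u₃ : ℝ) * c) ^ 2 := by
  have hgram : ((u₁ : ℝ) + u₃ * (-s)) ^ 2 + (u₂ : ℝ) ^ 2 + ((u₃ : ℝ) * c) ^ 2
      = (u₁ : ℝ) ^ 2 + (u₂ : ℝ) ^ 2 + (u₃ : ℝ) ^ 2 - 2 * s * (u₁ * u₃) := by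
    linear_combination (u₃ : ℝ) ^ 2 * hsc
  have hcross : 2 * s * ((u₁ : ℝ) * u₃) ≤ |(u₁ : ℝ) * u₃| := by
    calc 2 * s * ((u₁ : ℝ) * u₃) ≤ |2 * s * ((u₁ : ℝ) * u₃)| := le_abs_self _
      _ = 2 * |s| * |(u₁ : ℝ) * u₃| := by rw [abs_mul, abs_mul, abs_two]
      _ ≤ |(u₁ : ℝ) * u₃| := by nlinarith [abs_nonneg ((u₁ : ℝ) * u₃)]
  have hint : (1 : ℝ) ≤ (u₁ : ℝ) ^ 2 + (u₂ : ℝ) ^ 2 + (u₃ : ℝ) ^ 2 - |(u₁ : ℝ) * u₃| := by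
    exact_mod_cast Int.one_le_sq_add_sq_add_sq_sub_abs_mul hu
  linarith

lemma EuclideanSpace.norm_sq_fin_three (x : EuclideanSpace ℝ (Fin 3)) :
    ‖x‖ ^ 2 = x 0 ^ 2 + x 1 ^ 2 + x 2 ^ 2 := by
  rw [EuclideanSpace.real_norm_sq_eq, Fin.sum_univ_three]

lemma Real.abs_sin_le_half {β : ℝ} (hβ : |β| ≤ Real.pi / 6) : |Real.sin β| ≤ 1 / 2 := by
  obtain ⟨hβ1, hβ2⟩ := abs_le.1 hβ
  have hpi := Real.pi_pos
  have hlow : Real.sin (-(Real.pi / 6)) ≤ Real.sin β :=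
    Real.sin_le_sin_of_le_of_le_pi_div_two (by linarith) (by linarith) hβ1
  have hupp : Real.sin β ≤ Real.sin (Real.pi / 6) :=
    Real.sin_le_sin_of_le_of_le_pi_div_two (by linarith) (by linarith) hβ2
  rw [Real.sin_neg, Real.sin_pi_div_six] at hlow
  rw [Real.sin_pi_div_six] at hupp
  exact abs_le.2 ⟨hlow, hupp⟩

theorem packing_density_prism_family
    (β : ℝ) (hβ1 : 0 ≤ β) (hβ2 : β ≤ Real.pi / 6) :
    let Λ : Set (EuclideanSpace ℝ (Fin 3)) :=
      {x | ∃ u1 u2 u3 : ℤ,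
        x 0 = (u1 : ℝ) + (u3 : ℝ) * (-Real.sin β) ∧
        x 1 = (u2 : ℝ) ∧
        x 2 = (u3 : ℝ) * Real.cos β}
    -- the minimum distance of the lattice is 1
    ((∀ x ∈ Λ, x ≠ 0 → 1 ≤ ‖x‖) ∧ (∃ x ∈ Λ, x ≠ 0 ∧ ‖x‖ = 1)) ∧
    -- the packing density (π/6)·d_min³/vol equals π/(6 cos β)
    (Real.pi / 6) * (1 : ℝ) ^ 3 / Real.cos β = Real.pi / (6 * Real.cos β) ∧
    -- ranging from π/6 at β = 0 to π/(3√3) at β = π/6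
    Real.pi / (6 * Real.cos 0) = Real.pi / 6 ∧
    Real.pi / (6 * Real.cos (Real.pi / 6)) = Real.pi / (3 * Real.sqrt 3) := by
  intro Λ
  refine ⟨⟨?_, ?_⟩, by ring, by simp, by rw [Real.cos_pi_div_six]; ring⟩
  · rintro x ⟨u₁, u₂, u₃, hx₀, hx₁, hx₂⟩ hx
    have hu : ¬(u₁ = 0 ∧ u₂ = 0 ∧ u₃ = 0) := by
      rintro ⟨rfl, rfl, rfl⟩
      exact hx (by ext i; fin_cases i <;> simp [hx₀, hx₁, hx₂])
    rw [← one_le_sq_iff₀ (norm_nonneg x), EuclideanSpace.norm_sq_fin_three, hx₀, hx₁, hx₂]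
    have hsin : |Real.sin β| ≤ 1 / 2 :=
      Real.abs_sin_le_half (abs_le.2 ⟨by linarith [Real.pi_pos], hβ2⟩)
    exact one_le_sq_add_sq_add_sq_of_abs_le_half hsin (Real.sin_sq_add_cos_sq β) hu
  · refine ⟨EuclideanSpace.single 0 1, ⟨1, 0, 0, by simp, by simp, by simp⟩, ?_, by simp⟩
    simp [PiLp.single_eq_zero_iff]
end
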